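/- arXiv:1710.10382 — 2 statements merged into one kernel-verified Lean document; each statement's English description precedes it below -/
import Mathlib

section
/- Let X* be a k×(p+1) matrix with first column all ones, with positive sample variances var(z*_j) for each covariate column and sample correlation matrix R positive definite. Then the (0,0) entry of σ²((X*)ᵀX*)⁻¹ equals σ²(1/k + uᵀR⁻¹u/(k-1)) ≥ σ²/k, where u_j = -z̄*_j/√(var(z*_j)). -/
open Matrix

/-- Sample mean of the `j`-th covariate column. -/
noncomputable def sMean {k p : ℕ} (z : Fin k → Fin p → ℝ) (j : Fin p) : ℝ :=
  (∑ i, z i j) / k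

/-- Sample variance of the `j`-th covariate column. -/
noncomputable def sVar {k p : ℕ} (z : Fin k → Fin p → ℝ) (j : Fin p) : ℝ :=
  (∑ i, (z i j - sMean z j) ^ 2) / ((k : ℝ) - 1)

/-- Sample correlation matrix of the covariate columns. -/
noncomputable def sCorr {k p : ℕ} (z : Fin k → Fin p → ℝ) :
    Matrix (Fin p) (Fin p) ℝ :=
  Matrix.of fun j₁ j₂ =>
    (∑ i, (z i j₁ - sMean z j₁) * (z i j₂ - sMean z j₂)) /
      (((k : ℝ) - 1) * Real.sqrt (sVar z j₁ * sVar z j₂))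

/-- Design matrix with an all-ones first column. -/
def designX {k p : ℕ} (z : Fin k → Fin p → ℝ) :
    Matrix (Fin k) (Fin (p + 1)) ℝ :=
  Matrix.of fun i j => (Fin.cons 1 (z i) : Fin (p + 1) → ℝ) j

/-! Write `v = (s, b)` and `a = s + z̄ ⬝ b`. Then `X v = a 𝟙 + Z_c b` with `Z_c` the centred
covariates, and since the columns of `Z_c` sum to zero, `XᵀX v = (k a, k a z̄ + S b)` where
`S = Z_cᵀ Z_c = (k - 1) D R D`, `D = diag √var(z_j)`. This shows that `XᵀX` is invertible and that
`v = (1/k + z̄ᵀ S⁻¹ z̄, -S⁻¹ z̄)` solves `XᵀX v = e₀`, so `(XᵀX)⁻¹₀₀ = 1/k + z̄ᵀ S⁻¹ z̄`, and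
`z̄ᵀ S⁻¹ z̄ = uᵀ R⁻¹ u / (k - 1)` with `D⁻¹ z̄ = -u`. -/

section MatrixInverse

variable {n K : Type*} [Fintype n] [DecidableEq n] [Field K]

lemma Matrix.inv_apply_of_mulVec_eq_single {A : Matrix n n K} (hA : IsUnit A) {v : n → K}
    {i : n} (h : A *ᵥ v = Pi.single i 1) (j : n) : A⁻¹ j i = v j := by
  have hA' : A⁻¹ * A = 1 := Matrix.nonsing_inv_mul A ((Matrix.isUnit_iff_isUnit_det A).mp hA)
  have : v = A⁻¹ *ᵥ Pi.single i 1 := by rw [← h, mulVec_mulVec, hA', one_mulVec]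
  rw [this, mulVec_single_one, col_apply]

lemma Matrix.inv_diagonal_of_ne_zero {d : n → K} (hd : ∀ i, d i ≠ 0) :
    (diagonal d)⁻¹ = diagonal d⁻¹ :=
  inv_eq_left_inv <| by
    rw [diagonal_mul_diagonal, ← diagonal_one]
    exact congrArg diagonal (funext fun i => inv_mul_cancel₀ (hd i))

lemma Matrix.inv_smul₀ (c : K) (M : Matrix n n K) : (c • M)⁻¹ = c⁻¹ • M⁻¹ := by
  rcases eq_or_ne c 0 with rfl | hc
  · simp
  rw [smul_eq_diagonal_mul, Matrix.mul_inv_rev, inv_diagonal_of_ne_zero fun _ => hc,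
    smul_eq_mul_diagonal]
  rfl

lemma Matrix.dotProduct_inv_diagonal_mul_mul_diagonal_mulVec {d : n → K} (hd : ∀ i, d i ≠ 0)
    (R : Matrix n n K) (x : n → K) :
    x ⬝ᵥ (diagonal d * R * diagonal d)⁻¹ *ᵥ x = (x / d) ⬝ᵥ R⁻¹ *ᵥ (x / d) := by
  rw [Matrix.mul_inv_rev, Matrix.mul_inv_rev, inv_diagonal_of_ne_zero hd, ← mulVec_mulVec,
    ← mulVec_mulVec, dotProduct_mulVec]
  have hl : x ᵥ* diagonal d⁻¹ = x / d := funext fun i => by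
    rw [vecMul_diagonal, Pi.div_apply, div_eq_mul_inv, Pi.inv_apply]
  have hr : diagonal d⁻¹ *ᵥ x = x / d := funext fun i => by
    rw [mulVec_diagonal, Pi.div_apply, div_eq_inv_mul, Pi.inv_apply]
  rw [hl, hr]

end MatrixInverse

noncomputable def centered {k p : ℕ} (z : Fin k → Fin p → ℝ) : Matrix (Fin k) (Fin p) ℝ :=
  of fun i j => z i j - sMean z j

noncomputable def scatter {k p : ℕ} (z : Fin k → Fin p → ℝ) : Matrix (Fin p) (Fin p) ℝ :=
  (centered z)ᵀ * centered z

section Regression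

variable {k p : ℕ} (z : Fin k → Fin p → ℝ)

lemma sum_centered (hk : (k : ℝ) ≠ 0) (j : Fin p) : ∑ i, centered z i j = 0 := by
  simp only [centered, of_apply, Finset.sum_sub_distrib, Finset.sum_const, Finset.card_univ,
    Fintype.card_fin, nsmul_eq_mul, sMean, mul_div_cancel₀ _ hk, sub_self]

lemma sum_centered_mulVec (hk : (k : ℝ) ≠ 0) (b : Fin p → ℝ) :
    ∑ i, (centered z *ᵥ b) i = 0 := by
  simp only [mulVec, dotProduct]
  rw [Finset.sum_comm]
  simp [← Finset.sum_mul, sum_centered z hk]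

lemma designX_mulVec_cons (s : ℝ) (b : Fin p → ℝ) :
    designX z *ᵥ Fin.cons s b = fun i => (s + sMean z ⬝ᵥ b) + (centered z *ᵥ b) i := by
  ext i
  simp only [mulVec, dotProduct, designX, centered, of_apply, Fin.sum_univ_succ, Fin.cons_zero,
    Fin.cons_succ, sub_mul, Finset.sum_sub_distrib]
  ring

lemma transpose_designX_mulVec (y : Fin k → ℝ) :
    (designX z)ᵀ *ᵥ y = Fin.cons (∑ i, y i) ((∑ i, y i) • sMean z + (centered z)ᵀ *ᵥ y) := by
  ext j
  cases j using Fin.cases with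
  | zero => simp [mulVec, dotProduct, designX]
  | succ j =>
    simp only [mulVec, dotProduct, designX, centered, transpose_apply, of_apply, Fin.cons_succ,
      Pi.add_apply, Pi.smul_apply, smul_eq_mul, sub_mul, Finset.sum_sub_distrib, ← Finset.mul_sum]
    ring

lemma gram_designX_mulVec_cons (hk : (k : ℝ) ≠ 0) (s : ℝ) (b : Fin p → ℝ) :
    ((designX z)ᵀ * designX z) *ᵥ Fin.cons s b =
      (Fin.cons (k * (s + sMean z ⬝ᵥ b)) ((k * (s + sMean z ⬝ᵥ b)) • sMean z + scatter z *ᵥ b) :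
        Fin (p + 1) → ℝ) := by
  set a := s + sMean z ⬝ᵥ b
  have hsum : ∑ i, (a + (centered z *ᵥ b) i) = k * a := by
    simp [Finset.sum_add_distrib, sum_centered_mulVec z hk]
  have hscatter : (centered z)ᵀ *ᵥ (fun i => a + (centered z *ᵥ b) i) = scatter z *ᵥ b := by
    rw [scatter, ← mulVec_mulVec, show (fun i => a + (centered z *ᵥ b) i) =
      (fun _ => a) + centered z *ᵥ b from rfl, mulVec_add, add_eq_right]
    ext j
    simp [mulVec, dotProduct, ← Finset.sum_mul, sum_centered z hk]
  rw [← mulVec_mulVec, designX_mulVec_cons, transpose_designX_mulVec, hsum, hscatter]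

lemma isUnit_gram_designX (hk : (k : ℝ) ≠ 0) (hS : IsUnit (scatter z)) :
    IsUnit ((designX z)ᵀ * designX z) := by
  refine mulVec_injective_iff_isUnit.mp fun v w hvw => ?_
  rw [← sub_eq_zero, ← mulVec_sub] at hvw
  rw [← sub_eq_zero]
  obtain ⟨s, b, hsb⟩ : ∃ s b, v - w = Fin.cons s b := ⟨_, _, (Fin.cons_self_tail _).symm⟩
  have hzero : (0 : Fin (p + 1) → ℝ) = Fin.cons 0 0 := Matrix.cons_zero_zero.symm
  rw [hsb, gram_designX_mulVec_cons z hk, hzero, Fin.cons_inj] at hvw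
  obtain ⟨ha, hb⟩ := hvw
  have ha : s + sMean z ⬝ᵥ b = 0 := (mul_eq_zero.mp ha).resolve_left hk
  rw [ha, mul_zero, zero_smul, zero_add, ← mulVec_zero (scatter z)] at hb
  have hb : b = 0 := mulVec_injective_iff_isUnit.mpr hS hb
  rw [hb, dotProduct_zero, add_zero] at ha
  rw [hsb, hzero, ha, hb]

lemma gram_designX_inv_zero_zero (hk : (k : ℝ) ≠ 0) (hS : IsUnit (scatter z)) :
    ((designX z)ᵀ * designX z)⁻¹ 0 0 = 1 / k + sMean z ⬝ᵥ (scatter z)⁻¹ *ᵥ sMean z := by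
  have hv : ((designX z)ᵀ * designX z) *ᵥ
      Fin.cons (1 / k + sMean z ⬝ᵥ (scatter z)⁻¹ *ᵥ sMean z) (-((scatter z)⁻¹ *ᵥ sMean z)) =
      Pi.single 0 1 := by
    rw [gram_designX_mulVec_cons z hk, dotProduct_neg, add_neg_cancel_right, mul_one_div_cancel hk,
      one_smul, mulVec_neg, mulVec_mulVec, mul_nonsing_inv _ ((isUnit_iff_isUnit_det _).mp hS),
      one_mulVec, add_neg_cancel]
    ext j
    cases j using Fin.cases <;> simp
  exact inv_apply_of_mulVec_eq_single (isUnit_gram_designX z hk hS) hv 0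

lemma scatter_eq_smul_diagonal_mul_sCorr_mul_diagonal (hk : (k : ℝ) ≠ 1)
    (hvar : ∀ j, 0 < sVar z j) :
    scatter z = ((k : ℝ) - 1) •
      (diagonal (fun j => √(sVar z j)) * sCorr z * diagonal (fun j => √(sVar z j))) := by
  have hk' : (k : ℝ) - 1 ≠ 0 := sub_ne_zero.mpr hk
  ext j₁ j₂
  have h₁ := (Real.sqrt_pos.2 (hvar j₁)).ne'
  have h₂ := (Real.sqrt_pos.2 (hvar j₂)).ne'
  rw [Matrix.smul_apply, mul_diagonal, diagonal_mul, sCorr, of_apply, Real.sqrt_mul (hvar j₁).le,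
    smul_eq_mul]
  simp only [scatter, centered, mul_apply, transpose_apply, of_apply]
  field_simp

end Regression

/-- The variance of the intercept estimator: the `(0,0)` entry of
`σ² (X*ᵀX*)⁻¹` equals `σ² (1/k + uᵀR⁻¹u/(k-1))` and is at least `σ²/k`,
where `u_j = -z̄*_j/√(var z*_j)`. -/
theorem stmt_11 {k p : ℕ} (hk : 2 ≤ k) (z : Fin k → Fin p → ℝ)
    (hvar : ∀ j, 0 < sVar z j) (hR : (sCorr z).PosDef)
    (σ2 : ℝ) (hσ2 : 0 < σ2) :
    σ2 * (((designX z)ᵀ * designX z)⁻¹ 0 0) =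
      σ2 * (1 / k +
        ((fun j => -sMean z j / Real.sqrt (sVar z j)) ⬝ᵥ
          (sCorr z)⁻¹.mulVec fun j => -sMean z j / Real.sqrt (sVar z j)) /
          ((k : ℝ) - 1)) ∧
      σ2 / k ≤ σ2 * (((designX z)ᵀ * designX z)⁻¹ 0 0) := by
  have hk1 : (1 : ℝ) < k := by exact_mod_cast hk
  have hk0 : (k : ℝ) ≠ 0 := by positivity
  set d := fun j => √(sVar z j)
  set u := fun j => -sMean z j / d j
  have hd : ∀ j, d j ≠ 0 := fun j => (Real.sqrt_pos.2 (hvar j)).ne'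
  have hscatter := scatter_eq_smul_diagonal_mul_sCorr_mul_diagonal z hk1.ne' hvar
  have hS : IsUnit (scatter z) := by
    have hD : IsUnit (diagonal d) := isUnit_diagonal.mpr (Pi.isUnit_iff.mpr fun j => (hd j).isUnit)
    rw [hscatter]
    exact ((hD.mul hR.isUnit).mul hD).smul (Units.mk0 _ (sub_ne_zero.mpr hk1.ne'))
  have hquad : sMean z ⬝ᵥ (scatter z)⁻¹ *ᵥ sMean z = u ⬝ᵥ (sCorr z)⁻¹ *ᵥ u / ((k : ℝ) - 1) := by
    have hu : u = -(sMean z / d) := funext fun j => neg_div _ _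
    rw [hscatter, inv_smul₀, smul_mulVec, dotProduct_smul,
      dotProduct_inv_diagonal_mul_mul_diagonal_mulVec hd, hu, neg_dotProduct, mulVec_neg,
      dotProduct_neg, neg_neg, smul_eq_mul, inv_mul_eq_div]
  have hnonneg : 0 ≤ u ⬝ᵥ (sCorr z)⁻¹ *ᵥ u := hR.inv.posSemidef.dotProduct_mulVec_nonneg u
  rw [gram_designX_inv_zero_zero z hk0 hS, hquad]
  refine ⟨rfl, ?_⟩
  calc σ2 / k = σ2 * (1 / k + 0) := by ring
    _ ≤ _ := by gcongr; exact div_nonneg hnonneg (by linarith)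
end

section
/- Under the assumptions of the D-optimality IBOSS subdata: if the k = 2pr subdata values for covariate j include at least r values ≤ z_{(r)j} and r values ≥ z_{(n-r+1)j}, and R is the sample correlation matrix of the subdata with λ_min(R) > 0, then the variance of the j-th slope least squares estimator satisfies V(β̂ⱼ) ≤ 4pσ² / (k λ_min(R) (z_{(n-r+1)j} - z_{(r)j})²). -/
open Matrix

/-!
Write `A = XᵀX` for the design matrix `X`, `C` for the centred design and `D` for the
diagonal matrix of centred column norms, so that `CᵀC = D R D`. Splitting `X w` into its mean
and its centred part `C w'` gives
  `wᵀ A w ≥ ‖C w'‖² = (D w')ᵀ R (D w') ≥ λ_min ‖D w'‖² ≥ λ_min D_j² w_{j+1}²`.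
Testing this at `w = A⁻¹ e_{j+1}` turns it into `(A⁻¹)_{jj} ≤ 1 / (λ_min D_j²)`, and
`D_j² ≥ r (U - L)² / 2` because `r` values of the `j`-th column lie below `L` and `r` above `U`.
-/

open scoped MatrixOrder

theorem Matrix.IsHermitian.mul_dotProduct_self_le {n : Type*} [Fintype n] [DecidableEq n]
    {A : Matrix n n ℝ} (hA : A.IsHermitian) {c : ℝ} (hc : ∀ i, c ≤ hA.eigenvalues i)
    (x : n → ℝ) : c * (x ⬝ᵥ x) ≤ x ⬝ᵥ A *ᵥ x := by
  have hcA : algebraMap ℝ _ c ≤ A := by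
    rw [algebraMap_le_iff_le_spectrum hA.isSelfAdjoint, hA.spectrum_real_eq_range_eigenvalues]
    rintro _ ⟨i, rfl⟩
    exact hc i
  have := (Matrix.le_iff.mp hcA).dotProduct_mulVec_nonneg x
  simpa [sub_mulVec, dotProduct_sub, Algebra.algebraMap_eq_smul_one, smul_mulVec] using this

theorem Matrix.dotProduct_transpose_mul_self_mulVec {m n : Type*} [Fintype m] [Fintype n]
    (A : Matrix m n ℝ) (v : n → ℝ) : v ⬝ᵥ (Aᵀ * A) *ᵥ v = A *ᵥ v ⬝ᵥ A *ᵥ v := by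
  rw [← mulVec_mulVec, dotProduct_mulVec, vecMul_transpose]

theorem dotProduct_self_le_const_add {ι : Type*} [Fintype ι] (a : ℝ) {t : ι → ℝ}
    (ht : ∑ i, t i = 0) : t ⬝ᵥ t ≤ (fun i => a + t i) ⬝ᵥ fun i => a + t i := by
  have hexpand : ∀ i, (a + t i) * (a + t i) - t i * t i = a ^ 2 + 2 * a * t i :=
    fun i => by ring
  rw [← sub_nonneg]
  simp only [dotProduct, ← Finset.sum_sub_distrib, hexpand, Finset.sum_add_distrib,
    ← Finset.mul_sum, ht, mul_zero, add_zero]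
  positivity

theorem Matrix.inv_apply_self_le_inv_of_mul_sq_le {n : Type*} [Fintype n] [DecidableEq n]
    {A : Matrix n n ℝ} {c : ℝ} (hc : 0 < c) (i : n)
    (hA : ∀ v, c * v i ^ 2 ≤ v ⬝ᵥ A *ᵥ v) : A⁻¹ i i ≤ c⁻¹ := by
  by_cases hdet : IsUnit A.det
  · set v := A⁻¹ *ᵥ Pi.single i 1
    have hvi : v i = A⁻¹ i i := by simp [v, mulVec_single]
    have hAv : A *ᵥ v = Pi.single i 1 := by
      rw [mulVec_mulVec, mul_nonsing_inv A hdet, one_mulVec]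
    have hcq := hA v
    rw [hAv, dotProduct_single, mul_one, hvi] at hcq
    rcases le_or_gt (A⁻¹ i i) 0 with hq | hq
    · exact hq.trans (inv_pos.2 hc).le
    · rw [← one_div c, le_div_iff₀ hc]
      nlinarith
  · simp [nonsing_inv_apply_not_isUnit A hdet, hc.le]

theorem max_zero_sq_le_sq {a b : ℝ} (h : b ≤ a) : max b 0 ^ 2 ≤ a ^ 2 := by
  rw [← sq_abs a]
  exact pow_le_pow_left₀ (le_max_right _ _) (max_le (h.trans (le_abs_self a)) (abs_nonneg a)) 2

theorem card_mul_sq_sub_le_two_mul_sum_sq_sub {ι : Type*} [Fintype ι] [DecidableEq ι]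
    {r : ℕ} {x : ι → ℝ} (m : ℝ) {L U : ℝ} (hLU : L < U)
    (hL : r ≤ (Finset.univ.filter fun i => x i ≤ L).card)
    (hU : r ≤ (Finset.univ.filter fun i => U ≤ x i).card) :
    r * (U - L) ^ 2 ≤ 2 * ∑ i, (x i - m) ^ 2 := by
  set low := Finset.univ.filter fun i => x i ≤ L
  set upp := Finset.univ.filter fun i => U ≤ x i
  set a := max (m - L) 0
  set b := max (U - m) 0
  have hdisj : Disjoint low upp := Finset.disjoint_filter.2 fun i _ hi => by linarith
  have hlow : (r : ℝ) * a ^ 2 ≤ ∑ i ∈ low, (x i - m) ^ 2 :=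
    calc (r : ℝ) * a ^ 2 ≤ low.card • a ^ 2 := by
          rw [nsmul_eq_mul]; gcongr
      _ ≤ _ := Finset.card_nsmul_le_sum _ _ _ fun i hi => by
          rw [sub_sq_comm]
          exact max_zero_sq_le_sq (by linarith [(Finset.mem_filter.1 hi).2])
  have hupp : (r : ℝ) * b ^ 2 ≤ ∑ i ∈ upp, (x i - m) ^ 2 :=
    calc (r : ℝ) * b ^ 2 ≤ upp.card • b ^ 2 := by
          rw [nsmul_eq_mul]; gcongr
      _ ≤ _ := Finset.card_nsmul_le_sum _ _ _ fun i hi =>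
          max_zero_sq_le_sq (by linarith [(Finset.mem_filter.1 hi).2])
  have hab : U - L ≤ a + b := by linarith [le_max_left (m - L) 0, le_max_left (U - m) 0]
  calc (r : ℝ) * (U - L) ^ 2 ≤ r * (a + b) ^ 2 := by
        gcongr
    _ ≤ 2 * (r * a ^ 2 + r * b ^ 2) := by
        nlinarith [sq_nonneg (a - b), r.cast_nonneg (α := ℝ)]
    _ ≤ 2 * ∑ i ∈ low ∪ upp, (x i - m) ^ 2 := by
        rw [Finset.sum_union hdisj]; linarith
    _ ≤ 2 * ∑ i, (x i - m) ^ 2 := by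
        gcongr
        exact Finset.subset_univ _

section

variable {k p : ℕ} (z : Fin k → Fin p → ℝ)

noncomputable def centeredDesign : Matrix (Fin k) (Fin p) ℝ :=
  Matrix.of fun i j => z i j - sMean z j

noncomputable def centeredColNorm (j : Fin p) : ℝ :=
  √(∑ i, (z i j - sMean z j) ^ 2)

theorem centeredColNorm_sq (j : Fin p) :
    centeredColNorm z j ^ 2 = ∑ i, (z i j - sMean z j) ^ 2 :=
  Real.sq_sqrt (by positivity)

theorem vecMul_centeredDesign_one : 1 ᵥ* centeredDesign z = 0 := by
  ext j
  rcases Nat.eq_zero_or_pos k with rfl | hk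
  · simp [vecMul, dotProduct]
  · simp [vecMul, dotProduct, centeredDesign, sMean, Finset.sum_sub_distrib,
      mul_div_cancel₀ _ (Nat.cast_ne_zero.2 hk.ne' : (k : ℝ) ≠ 0)]

theorem sub_one_mul_sVar (hk : 1 < k) (j : Fin p) :
    ((k : ℝ) - 1) * sVar z j = ∑ i, (z i j - sMean z j) ^ 2 := by
  have : (k : ℝ) - 1 ≠ 0 := sub_ne_zero.2 (by exact_mod_cast hk.ne')
  rw [sVar, mul_div_cancel₀ _ this]

theorem transpose_centeredDesign_mul_self (hk : 1 < k) :
    (centeredDesign z)ᵀ * centeredDesign z =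
      diagonal (centeredColNorm z) * sCorr z * diagonal (centeredColNorm z) := by
  ext j₁ j₂
  rw [mul_diagonal, diagonal_mul]
  simp only [mul_apply, transpose_apply, centeredDesign, of_apply, sCorr, centeredColNorm,
    ← sub_one_mul_sVar z hk]
  have hk1 : (0 : ℝ) < k - 1 := sub_pos.2 (by exact_mod_cast hk)
  have hs : ∀ j, 0 ≤ sVar z j := fun j =>
    div_nonneg (Finset.sum_nonneg fun i _ => sq_nonneg _) hk1.le
  have hprod : (k - 1) * sVar z j₁ * ((k - 1) * sVar z j₂) =
      ((k : ℝ) - 1) ^ 2 * (sVar z j₁ * sVar z j₂) := by ring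
  have hden : √((k - 1) * sVar z j₁) * √((k - 1) * sVar z j₂) =
      (k - 1) * √(sVar z j₁ * sVar z j₂) := by
    rw [← Real.sqrt_mul (mul_nonneg hk1.le (hs j₁)), hprod, Real.sqrt_mul (sq_nonneg _),
      Real.sqrt_sq hk1.le]
  rw [mul_right_comm, hden]
  -- A constant column makes the denominator of `sCorr` vanish (junk value `0`); by
  -- Cauchy-Schwarz the cross product then vanishes as well.
  rcases eq_or_ne ((k - 1) * √(sVar z j₁ * sVar z j₂)) 0 with h | h
  · have hss : sVar z j₁ * sVar z j₂ = 0 := le_antisymm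
      (Real.sqrt_eq_zero'.1 ((mul_eq_zero.1 h).resolve_left hk1.ne')) (mul_nonneg (hs j₁) (hs j₂))
    have hcs := Finset.sum_mul_sq_le_sq_mul_sq Finset.univ
      (fun i => z i j₁ - sMean z j₁) (fun i => z i j₂ - sMean z j₂)
    rw [← sub_one_mul_sVar z hk, ← sub_one_mul_sVar z hk, hprod, hss, mul_zero] at hcs
    rw [h, div_zero, mul_zero]
    exact pow_eq_zero_iff two_ne_zero |>.1 (le_antisymm hcs (sq_nonneg _))
  · rw [mul_div_cancel₀ _ h]

theorem mulVec_designX (w : Fin (p + 1) → ℝ) (i : Fin k) :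
    (designX z *ᵥ w) i = (w 0 + ∑ j, w j.succ * sMean z j) +
      (centeredDesign z *ᵥ fun j => w j.succ) i := by
  simp only [mulVec, dotProduct, Fin.sum_univ_succ, designX, centeredDesign, of_apply,
    Fin.cons_zero, Fin.cons_succ, one_mul, add_assoc, ← Finset.sum_add_distrib]
  congr 1
  exact Finset.sum_congr rfl fun j _ => by ring

theorem mul_sq_le_dotProduct_transpose_designX_mul_mulVec (hk : 1 < k)
    (hR : (sCorr z).IsHermitian) {c : ℝ} (hc0 : 0 ≤ c) (hc : ∀ i, c ≤ hR.eigenvalues i)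
    (j : Fin p) (w : Fin (p + 1) → ℝ) :
    c * centeredColNorm z j ^ 2 * w j.succ ^ 2 ≤ w ⬝ᵥ ((designX z)ᵀ * designX z) *ᵥ w := by
  set w' : Fin p → ℝ := fun j => w j.succ
  set u := diagonal (centeredColNorm z) *ᵥ w'
  have hu : w' ᵥ* diagonal (centeredColNorm z) = u := by
    ext i; simp only [u, vecMul_diagonal, mulVec_diagonal, mul_comm]
  have hcentered : ∑ i, (centeredDesign z *ᵥ w') i = 0 := by
    rw [← one_dotProduct, dotProduct_mulVec, vecMul_centeredDesign_one, zero_dotProduct]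
  calc c * centeredColNorm z j ^ 2 * w j.succ ^ 2 = c * (u j * u j) := by
        simp only [u, w', mulVec_diagonal]; ring
    _ ≤ c * (u ⬝ᵥ u) := by
        gcongr
        exact Finset.single_le_sum (f := fun i => u i * u i) (fun i _ => mul_self_nonneg _)
          (Finset.mem_univ j)
    _ ≤ u ⬝ᵥ sCorr z *ᵥ u := hR.mul_dotProduct_self_le hc u
    _ = w' ⬝ᵥ ((centeredDesign z)ᵀ * centeredDesign z) *ᵥ w' := by
        rw [transpose_centeredDesign_mul_self z hk, ← mulVec_mulVec, ← mulVec_mulVec,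
          dotProduct_mulVec w', hu]
    _ = centeredDesign z *ᵥ w' ⬝ᵥ centeredDesign z *ᵥ w' :=
        dotProduct_transpose_mul_self_mulVec _ _
    _ ≤ designX z *ᵥ w ⬝ᵥ designX z *ᵥ w := by
        simp only [funext (mulVec_designX z w)]
        exact dotProduct_self_le_const_add _ hcentered
    _ = w ⬝ᵥ ((designX z)ᵀ * designX z) *ᵥ w := (dotProduct_transpose_mul_self_mulVec _ _).symm

end

/-- IBOSS variance upper bound: with `k = 2pr` subdata points whose `j`-th
covariate values include at least `r` values `≤ L` and `r` values `≥ U`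
(`L < U`), and sample correlation matrix `R` with `λ_min(R) > 0`, the
variance of the `j`-th slope estimator satisfies
`V(β̂ⱼ) ≤ 4pσ²/(k λ_min(R) (U-L)²)`. -/
theorem stmt_13 {k p r : ℕ} (hp : 0 < p) (hr : 0 < r) (hkpr : k = 2 * p * r)
    (z : Fin k → Fin p → ℝ) (j : Fin p) (L U : ℝ) (hLU : L < U)
    (hL : r ≤ (Finset.univ.filter fun i => z i j ≤ L).card)
    (hU : r ≤ (Finset.univ.filter fun i => U ≤ z i j).card)
    (hR : (sCorr z).PosDef)
    (hlam : 0 < Finset.univ.inf' ⟨j, Finset.mem_univ j⟩ hR.1.eigenvalues)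
    (σ2 : ℝ) (hσ2 : 0 < σ2) :
    σ2 * (((designX z)ᵀ * designX z)⁻¹ j.succ j.succ) ≤
      4 * p * σ2 /
        ((k : ℝ) * (Finset.univ.inf' ⟨j, Finset.mem_univ j⟩ hR.1.eigenvalues) *
          (U - L) ^ 2) := by
  set lam := Finset.univ.inf' ⟨j, Finset.mem_univ j⟩ hR.1.eigenvalues
  set c := lam * (r * (U - L) ^ 2 / 2) with hc_def
  have hk : 1 < k := by rw [hkpr]; nlinarith
  have hspread : (r : ℝ) * (U - L) ^ 2 ≤ 2 * centeredColNorm z j ^ 2 := by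
    rw [centeredColNorm_sq]
    exact card_mul_sq_sub_le_two_mul_sum_sq_sub _ hLU hL hU
  have hc : 0 < c := by
    have : 0 < U - L := sub_pos.2 hLU
    positivity
  have hinv : ((designX z)ᵀ * designX z)⁻¹ j.succ j.succ ≤ c⁻¹ :=
    inv_apply_self_le_inv_of_mul_sq_le hc j.succ fun w => calc
      c * w j.succ ^ 2 ≤ lam * centeredColNorm z j ^ 2 * w j.succ ^ 2 := by
        rw [hc_def]; gcongr; linarith
      _ ≤ _ := mul_sq_le_dotProduct_transpose_designX_mul_mulVec z hk hR.1 hlam.le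
        (fun i => Finset.inf'_le _ (Finset.mem_univ i)) j w
  calc σ2 * ((designX z)ᵀ * designX z)⁻¹ j.succ j.succ ≤ σ2 * c⁻¹ := by gcongr
    _ = 4 * p * σ2 / (k * lam * (U - L) ^ 2) := by
        rw [hc_def, hkpr]; push_cast; field_simp; ring
end
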